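/- Let A, B ∈ ℤ[x] be coprime monic polynomials with resultant Δ, G(n) = gcd(A(n), B(n)), and p a prime. If p^{ω₁} divides G(n₁) and p^{ω₂} divides G(n₂) for integers n₁ ≠ n₂, then ν_p(n₂ − n₁) ≥ ω₁ + ω₂ − ν_p(Δ). -/

import Mathlib

/-!
`sylvesterMatrix A B` is Mathlib's `sylvester A B` with rows and columns reversed, so
`Δ = det S` for `S = sylvester A B`, whose row `i` holds the coefficients of `X ^ i`.
Replacing rows `0` and `1` of `S` by the evaluation rows `(t ^ i)ᵢ ᵥ* S` at `t = n₁` and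
`t = n₂` turns the determinant into `(n₂ - n₁) * Δ`, while the new rows have entries
`t ^ j * A(t)` and `t ^ j * B(t)`, hence are divisible by `p ^ ω₁` and `p ^ ω₂` respectively.
So `p ^ (ω₁ + ω₂) ∣ (n₂ - n₁) * Δ`, and `Δ ≠ 0` because `A` and `B` are coprime over `ℚ`.
-/

open Polynomial

/-- The Sylvester matrix of two integer polynomials `A` and `B`, of size
`(d+e) × (d+e)` where `d = deg A`, `e = deg B`: the first `e` columns carry the
(shifted) coefficients of `A`, the last `d` columns those of `B`. -/
noncomputable def sylvesterMatrix (A B : Polynomial ℤ) :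
    Matrix (Fin (A.natDegree + B.natDegree)) (Fin (A.natDegree + B.natDegree)) ℤ :=
  Matrix.of fun i j =>
    if (j : ℕ) < B.natDegree then
      if (j : ℕ) ≤ (i : ℕ) ∧ (i : ℕ) ≤ (j : ℕ) + A.natDegree then
        A.coeff (A.natDegree + (j : ℕ) - (i : ℕ)) else 0
    else
      if (j : ℕ) - B.natDegree ≤ (i : ℕ) ∧ (i : ℕ) ≤ (j : ℕ) then
        B.coeff ((j : ℕ) - (i : ℕ)) else 0

/-- The resultant of two integer polynomials, as the determinant of their Sylvester matrix. -/
noncomputable def resultant (A B : Polynomial ℤ) : ℤ := (sylvesterMatrix A B).det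


open Matrix

namespace Matrix

variable {n R : Type*} [Fintype n] [DecidableEq n] [CommRing R]

theorem mul_dvd_det_of_dvd_rows {M : Matrix n n R} {i j : n} (hij : i ≠ j) {a b : R}
    (ha : ∀ k, a ∣ M i k) (hb : ∀ k, b ∣ M j k) : a * b ∣ M.det := by
  rw [← det_transpose, det_apply']
  refine Finset.dvd_sum fun σ _ => Dvd.dvd.mul_left ?_ _
  calc a * b ∣ ∏ k ∈ {i, j}, M k (σ k) := by
        rw [Finset.prod_pair hij]; exact mul_dvd_mul (ha _) (hb _)
    _ ∣ ∏ k, Mᵀ (σ k) k := Finset.prod_dvd_prod_of_subset _ _ _ (Finset.subset_univ _)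

theorem det_updateRow_vecMul (M : Matrix n n R) (i : n) (v : n → R) :
    (M.updateRow i (v ᵥ* M)).det = v i * M.det := by
  rw [vecMul_eq_sum, det_updateRow_sum, smul_eq_mul]

theorem det_updateRow_vecMul_updateRow_vecMul (M : Matrix n n R) {i j : n} (hij : i ≠ j)
    {v w : n → R} (hv : v i = 1) (hw : w i = 1) :
    ((M.updateRow i (v ᵥ* M)).updateRow j (w ᵥ* M)).det = (w j - v j) * M.det := by
  set M₁ := M.updateRow i (v ᵥ* M)
  -- `w - v` vanishes at `i`, the only row where `M₁` and `M` differ.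
  have hsplit : w ᵥ* M = M₁ i + (w - v) ᵥ* M₁ := by
    have hwv : (w - v) ᵥ* M₁ = (w - v) ᵥ* M := by
      simp only [vecMul_eq_sum, M₁]
      refine Finset.sum_congr rfl fun k _ => ?_
      rcases eq_or_ne k i with rfl | hk
      · simp [hv, hw]
      · rw [updateRow_ne hk]
    rw [hwv, sub_vecMul]
    simp [M₁]
  rw [hsplit, det_updateRow_add, det_updateRow_eq_zero hij, zero_add, det_updateRow_vecMul,
    det_updateRow_vecMul, hv, one_mul, Pi.sub_apply]

end Matrix

namespace Polynomial

variable {R : Type*} [CommRing R]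

theorem degreeLT.sum_pow_mul_coeff {N : ℕ} (P : R[X]_N) (t : R) :
    ∑ i : Fin N, t ^ (i : ℕ) * (P : R[X]).coeff i = (P : R[X]).eval t := by
  conv_rhs => rw [← (degreeLT.basis R N).sum_repr P]
  simp [eval_finsetSum, mul_comm]

theorem vecMul_pow_sylvester {f g : R[X]} {m n : ℕ} (hf : f.natDegree ≤ m)
    (hg : g.natDegree ≤ n) (t : R) :
    (fun i : Fin (m + n) => t ^ (i : ℕ)) ᵥ* sylvester f g m n =
      Fin.append (fun j : Fin m => t ^ (j : ℕ) * g.eval t)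
        (fun j : Fin n => t ^ (j : ℕ) * f.eval t) := by
  ext j
  rw [← toMatrix_sylvesterMap' f g hf hg]
  simp only [vecMul, dotProduct, LinearMap.toMatrix_apply, degreeLT.basis_repr]
  rw [degreeLT.sum_pow_mul_coeff, ← degreeLT.basisProd]
  induction j using Fin.addCases <;> simp [mul_comm]

theorem dvd_vecMul_pow_sylvester {f g : R[X]} {m n : ℕ} (hf : f.natDegree ≤ m)
    (hg : g.natDegree ≤ n) {t d : R} (hft : d ∣ f.eval t) (hgt : d ∣ g.eval t)
    (k : Fin (m + n)) :
    d ∣ ((fun i : Fin (m + n) => t ^ (i : ℕ)) ᵥ* sylvester f g m n) k := by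
  rw [vecMul_pow_sylvester hf hg]
  induction k using Fin.addCases with
  | left j => simpa using hgt.mul_left _
  | right j => simpa using hft.mul_left _

theorem mul_dvd_sub_mul_resultant {f g : R[X]} {m n : ℕ} (hf : f.natDegree ≤ m)
    (hg : g.natDegree ≤ n) (hmn : 2 ≤ m + n) {x y d₁ d₂ : R}
    (hfx : d₁ ∣ f.eval x) (hgx : d₁ ∣ g.eval x) (hfy : d₂ ∣ f.eval y) (hgy : d₂ ∣ g.eval y) :
    d₁ * d₂ ∣ (y - x) * f.resultant g m n := by
  let i₀ : Fin (m + n) := ⟨0, by omega⟩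
  let i₁ : Fin (m + n) := ⟨1, by omega⟩
  have hi : i₀ ≠ i₁ := by simp [i₀, i₁, Fin.ext_iff]
  have hdet := det_updateRow_vecMul_updateRow_vecMul (sylvester f g m n) hi
    (v := fun i => x ^ (i : ℕ)) (w := fun i => y ^ (i : ℕ)) (by simp [i₀]) (by simp [i₀])
  simp only [i₁, pow_one] at hdet
  rw [resultant, ← hdet]
  refine mul_dvd_det_of_dvd_rows hi (fun k => ?_) (fun k => ?_)
  · rw [updateRow_ne hi, updateRow_self]
    exact dvd_vecMul_pow_sylvester hf hg hfx hgx k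
  · rw [updateRow_self]
    exact dvd_vecMul_pow_sylvester hf hg hfy hgy k

theorem Monic.mul_dvd_sub_mul_resultant {f g : R[X]} (hg : g.Monic) {x y d₁ d₂ : R}
    (hfx : d₁ ∣ f.eval x) (hgx : d₁ ∣ g.eval x) (hfy : d₂ ∣ f.eval y) (hgy : d₂ ∣ g.eval y) :
    d₁ * d₂ ∣ (y - x) * f.resultant g := by
  -- Padding the formal degree of `f` by two makes room for two evaluation rows and only
  -- multiplies the resultant by `(-1) ^ (2 * deg g) * lc(g) ^ 2 = 1`.
  have h := Polynomial.mul_dvd_sub_mul_resultant (m := f.natDegree + 2) (n := g.natDegree)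
    (by omega) le_rfl (by omega) hfx hgx hfy hgy
  rwa [resultant_add_left_deg _ _ _ _ _ le_rfl, hg.coeff_natDegree, one_pow, mul_one,
    mul_comm _ 2, pow_mul, neg_one_sq, one_pow, one_mul] at h

end Polynomial

theorem sylvesterMatrix_eq_submatrix_rev (A B : ℤ[X]) :
    sylvesterMatrix A B =
      (sylvester A B A.natDegree B.natDegree).submatrix Fin.rev Fin.rev := by
  ext i j
  rw [← Fin.rev_rev j]
  induction j.rev using Fin.addCases <;>
    simp only [sylvesterMatrix, sylvester, of_apply, submatrix_apply, Fin.rev_rev,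
      Fin.addCases_left, Fin.addCases_right, Fin.val_rev, Fin.val_castAdd, Fin.val_natAdd,
      Set.mem_Icc] <;>
    split_ifs <;> first | omega | rfl | congr 1; omega

theorem resultant_eq_polynomial_resultant (A B : ℤ[X]) :
    _root_.resultant A B = A.resultant B := by
  rw [_root_.resultant, Polynomial.resultant, sylvesterMatrix_eq_submatrix_rev]
  exact det_submatrix_equiv_self Fin.revPerm _

theorem valuation_of_difference (A B : Polynomial ℤ)
    (hA : A.Monic) (hB : B.Monic)
    (hcop : IsCoprime (A.map (Int.castRingHom ℚ)) (B.map (Int.castRingHom ℚ)))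
    (p : ℕ) (hp : p.Prime) (ω₁ ω₂ : ℕ) (n₁ n₂ : ℤ) (hne : n₁ ≠ n₂)
    (h₁ : ((p : ℤ) ^ ω₁) ∣ (Int.gcd (A.eval n₁) (B.eval n₁) : ℤ))
    (h₂ : ((p : ℤ) ^ ω₂) ∣ (Int.gcd (A.eval n₂) (B.eval n₂) : ℤ)) :
    ω₁ + ω₂ ≤ padicValInt p (n₂ - n₁) + padicValInt p (_root_.resultant A B) := by
  have : Fact p.Prime := ⟨hp⟩
  have hdvd : (p : ℤ) ^ (ω₁ + ω₂) ∣ (n₂ - n₁) * A.resultant B := by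
    rw [pow_add]
    exact hB.mul_dvd_sub_mul_resultant (h₁.trans (Int.gcd_dvd_left _ _))
      (h₁.trans (Int.gcd_dvd_right _ _)) (h₂.trans (Int.gcd_dvd_left _ _))
      (h₂.trans (Int.gcd_dvd_right _ _))
  have hR : A.resultant B ≠ 0 := by
    have h := resultant_ne_zero _ _ hcop
    rwa [hA.natDegree_map, hB.natDegree_map, resultant_map_map,
      map_ne_zero_iff _ (RingHom.injective_int _)] at h
  have hD : n₂ - n₁ ≠ 0 := sub_ne_zero.mpr hne.symm
  rw [resultant_eq_polynomial_resultant, ← padicValInt.mul hD hR]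
  exact ((padicValInt_dvd_iff _ _).1 hdvd).resolve_left (mul_ne_zero hD hR)
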